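/- arXiv:1704.02953 — 3 statements merged into one kernel-verified Lean document; each statement's English description precedes it below -/
import Mathlib

section
/- Let P and Q be probability measures on ℕ with P = Bin(p_1, …, p_n) (law of a sum of independent Bernoulli(p_i)) and Q = Bin(q_1, …, q_n), where q and p agree except in two coordinates i ≠ j, with q_i + q_j = p_i + p_j. Let f^{ij} be the law of the sum without coordinates i and j. Then for every integer t, P({t}) − Q({t}) = (p_i p_j − q_i q_j)(f^{ij}(t) − 2 f^{ij}(t−1) + f^{ij}(t−2)), and Σ_{s ≥ t}(P({s}) − Q({s})) = (p_i p_j − q_i q_j)(f^{ij}(t−2) − f^{ij}(t−1)). -/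
/-!
Splitting off the coordinates `i` and `j`, the law of the full sum is
`(1 - p i)(1 - p j) f(t) + (p i + p j - 2 p i p j) f(t - 1) + p i p j f(t - 2)` with `f = f^{ij}`.
Since `q` agrees with `p` off `{i, j}` and `q i + q j = p i + p j`, only the product `p i p j`
changes, which gives the pointwise formula. It is the backward difference of
`g(s) = (p i p j - q i q j)(f(s) - f(s - 1))`, a function vanishing for large `s`, so the tail sum
telescopes to `-g(t - 1)`.
-/

open Finset

noncomputable def binProbOn {ι : Type*} [DecidableEq ι] (s : Finset ι) (p : ι → ℝ) (t : ℤ) : ℝ :=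
  ∑ S ∈ s.powerset.filter (fun S => (S.card : ℤ) = t), (∏ l ∈ S, p l) * ∏ l ∈ s \ S, (1 - p l)

theorem Finset.sum_Ico_sub_pred {G : Type*} [AddCommGroup G] (h : ℤ → G) {a b : ℤ} (hab : a ≤ b) :
    ∑ s ∈ Ico a b, (h s - h (s - 1)) = h (b - 1) - h (a - 1) := by
  induction b, hab using Int.leInduction with
  | base => simp
  | succ b hab ih =>
    rw [Ico_add_one_right_eq_Icc, ← Ico_insert_right hab, sum_insert right_notMem_Ico, ih,
      add_sub_cancel_right]
    abel

theorem tsum_ite_le_sub_pred {G : Type*} [AddCommGroup G] [TopologicalSpace G] (h : ℤ → G) {B : ℤ}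
    (hB : ∀ s, B ≤ s → h s = 0) (t : ℤ) :
    (∑' s : ℤ, if t ≤ s then h s - h (s - 1) else 0) = -h (t - 1) := by
  set N := max t (B + 1)
  have hsupp : ∀ s ∉ Ico t N, (if t ≤ s then h s - h (s - 1) else 0) = 0 := by
    intro s hs
    split_ifs with hts
    · rw [mem_Ico, not_and, not_lt] at hs
      have hNs := hs hts
      rw [hB s (by omega), hB (s - 1) (by omega), sub_self]
    · rfl
  rw [tsum_eq_sum hsupp, sum_congr rfl fun s hs => if_pos (mem_Ico.mp hs).1,
    sum_Ico_sub_pred h (le_max_left _ _), hB (N - 1) (by omega), zero_sub]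

section
variable {ι : Type*} [DecidableEq ι]

theorem binProbOn_eq_sum_powerset (s : Finset ι) (p : ι → ℝ) (t : ℤ) :
    binProbOn s p t =
      ∑ S ∈ s.powerset, if (#S : ℤ) = t then (∏ l ∈ S, p l) * ∏ l ∈ s \ S, (1 - p l) else 0 :=
  sum_filter _ _

theorem binProbOn_congr {s : Finset ι} {p q : ι → ℝ} (h : ∀ l ∈ s, p l = q l) (t : ℤ) :
    binProbOn s p t = binProbOn s q t := by
  refine sum_congr rfl fun S hS => ?_
  have hSs : S ⊆ s := mem_powerset.mp (mem_filter.mp hS).1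
  rw [prod_congr rfl fun l hl => h l (hSs hl),
    prod_congr rfl fun l hl => congrArg (1 - ·) (h l (mem_sdiff.mp hl).1)]

theorem binProbOn_eq_zero_of_card_lt (s : Finset ι) (p : ι → ℝ) {t : ℤ} (ht : (#s : ℤ) < t) :
    binProbOn s p t = 0 := by
  refine sum_eq_zero fun S hS => absurd (mem_filter.mp hS).2 ?_
  have := card_le_card (mem_powerset.mp (mem_filter.mp hS).1)
  omega

theorem binProbOn_insert {s : Finset ι} {i : ι} (hi : i ∉ s) (p : ι → ℝ) (t : ℤ) :
    binProbOn (insert i s) p t = (1 - p i) * binProbOn s p t + p i * binProbOn s p (t - 1) := by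
  simp only [binProbOn_eq_sum_powerset, sum_powerset_insert hi, mul_sum]
  congr 1 <;> refine sum_congr rfl fun S hS => ?_
  all_goals have hiS : i ∉ S := fun h => hi (mem_powerset.mp hS h)
  · rw [insert_sdiff_of_notMem _ hiS, prod_insert fun h => hi (mem_sdiff.mp h).1]
    split_ifs <;> ring
  · rw [card_insert_of_notMem hiS, prod_insert hiS, insert_sdiff_insert, sdiff_insert_of_notMem hi]
    simp only [Nat.cast_add_one, ← eq_sub_iff_add_eq]
    split_ifs <;> ring

theorem binProbOn_insert_insert {s : Finset ι} {i j : ι} (hi : i ∉ insert j s) (hj : j ∉ s)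
    (p : ι → ℝ) (t : ℤ) :
    binProbOn (insert i (insert j s)) p t =
      (1 - p i) * (1 - p j) * binProbOn s p t
        + (p i + p j - 2 * (p i * p j)) * binProbOn s p (t - 1)
        + p i * p j * binProbOn s p (t - 2) := by
  rw [binProbOn_insert hi, binProbOn_insert hj, binProbOn_insert hj, sub_sub, one_add_one_eq_two]
  ring

theorem binProbOn_insert_insert_sub {s : Finset ι} {i j : ι} (hi : i ∉ insert j s) (hj : j ∉ s)
    {p q : ι → ℝ} (hagree : ∀ l ∈ s, q l = p l) (hsum : q i + q j = p i + p j) (t : ℤ) :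
    binProbOn (insert i (insert j s)) p t - binProbOn (insert i (insert j s)) q t =
      (p i * p j - q i * q j) *
        (binProbOn s p t - 2 * binProbOn s p (t - 1) + binProbOn s p (t - 2)) := by
  simp only [binProbOn_insert_insert hi hj, binProbOn_congr hagree]
  linear_combination (binProbOn s p t - binProbOn s p (t - 1)) * hsum

end

theorem stmt_13_general (n : ℕ) (p q : Fin n → ℝ)
    (i j : Fin n) (hij : i ≠ j)
    (hagree : ∀ l, l ≠ i → l ≠ j → q l = p l)
    (hsum : q i + q j = p i + p j) :
    (∀ t : ℤ,
      binProbOn Finset.univ p t - binProbOn Finset.univ q t =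
        (p i * p j - q i * q j) *
          (binProbOn (Finset.univ \ {i, j}) p t
            - 2 * binProbOn (Finset.univ \ {i, j}) p (t - 1)
            + binProbOn (Finset.univ \ {i, j}) p (t - 2))) ∧
    (∀ t : ℤ,
      (∑' s : ℤ, if t ≤ s then binProbOn Finset.univ p s - binProbOn Finset.univ q s else 0) =
        (p i * p j - q i * q j) *
          (binProbOn (Finset.univ \ {i, j}) p (t - 2)
            - binProbOn (Finset.univ \ {i, j}) p (t - 1))) := by
  set u : Finset (Fin n) := univ \ {i, j}
  have hju : j ∉ u := by simp [u]
  have hiu : i ∉ insert j u := by simp [u, hij]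
  have huniv : insert i (insert j u) = univ := by
    ext l
    by_cases hli : l = i <;> by_cases hlj : l = j <;> simp [u, hli, hlj]
  have hagree' : ∀ l ∈ u, q l = p l := fun l hl => by
    simp only [u, mem_sdiff, mem_insert, mem_singleton, not_or] at hl
    exact hagree l hl.2.1 hl.2.2
  have hpoint := binProbOn_insert_insert_sub hiu hju hagree' hsum
  rw [huniv] at hpoint
  refine ⟨hpoint, fun t => ?_⟩
  set g : ℤ → ℝ := fun s => (p i * p j - q i * q j) * (binProbOn u p s - binProbOn u p (s - 1))
  have hg : ∀ s, (#u : ℤ) + 2 ≤ s → g s = 0 := fun s hs => by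
    simp only [g, binProbOn_eq_zero_of_card_lt u p (by omega : (#u : ℤ) < s),
      binProbOn_eq_zero_of_card_lt u p (by omega : (#u : ℤ) < s - 1), sub_self, mul_zero]
  have hdiff : ∀ s, binProbOn univ p s - binProbOn univ q s = g s - g (s - 1) := fun s => by
    simp only [hpoint, g, show s - 1 - 1 = s - 2 by ring]
    ring
  simp only [hdiff, tsum_ite_le_sub_pred g hg, g, show t - 1 - 1 = t - 2 by ring]
  ring

theorem stmt_13 (n : ℕ) (p q : Fin n → ℝ)
    (hp : ∀ l, 0 ≤ p l ∧ p l ≤ 1) (hq : ∀ l, 0 ≤ q l ∧ q l ≤ 1)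
    (i j : Fin n) (hij : i ≠ j)
    (hagree : ∀ l, l ≠ i → l ≠ j → q l = p l)
    (hsum : q i + q j = p i + p j) :
    (∀ t : ℤ,
      binProbOn Finset.univ p t - binProbOn Finset.univ q t =
        (p i * p j - q i * q j) *
          (binProbOn (Finset.univ \ {i, j}) p t
            - 2 * binProbOn (Finset.univ \ {i, j}) p (t - 1)
            + binProbOn (Finset.univ \ {i, j}) p (t - 2))) ∧
    (∀ t : ℤ,
      (∑' s : ℤ, if t ≤ s then binProbOn Finset.univ p s - binProbOn Finset.univ q s else 0) =
        (p i * p j - q i * q j) *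
          (binProbOn (Finset.univ \ {i, j}) p (t - 2)
            - binProbOn (Finset.univ \ {i, j}) p (t - 1))) :=
  stmt_13_general n p q i j hij hagree hsum
end

section
/- Let X ~ Bin(p_1, …, p_n), Z ~ Bin(d/n, …, d/n) with d = Σ p_i and p_max = max_i p_i. Then for every integer k, |P(X = k) − P(Z = k)| ≤ 2 d p_max · exp(−d·h(((k − 2 − d)/d)₊)) and |P(X > k−1) − P(Z > k−1)| ≤ d p_max · exp(−d·h(((k − 2 − d)/d)₊)), where h(x) = (1+x)log(1+x) − x. -/
/-!
Lindeberg replacement. Conditioning on all trials but `i` and `j` shows that replacing the pair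
`(p i, p j)` by `(a, b)` with `a + b = p i + p j` changes `P(X ∈ A)` by `p i * p j - a * b` times
a second difference of the law of the remaining trials `Y`. For `A = {k}` and `A = [k, ∞)` that
second difference is at most `2 P(Y ≥ k - 2)`, resp. `P(Y ≥ k - 2)`, which Bennett's inequality
bounds. Reaching the constant vector `d / n` takes at most `n` replacements
`(p i, p j) ↦ (d / n, p i + p j - d / n)` with `p i < d / n < p j`, each with
`|p i * p j - a * b| ≤ (d / n) * pmax`.
-/

open Finset Real

/-- `h(x) = (1+x) log(1+x) − x`. -/
noncomputable def bennettH (x : ℝ) : ℝ := (1 + x) * Real.log (1 + x) - x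

section Bernoulli

variable {ι : Type*} [DecidableEq ι] {s u : Finset ι} {p q : ι → ℝ} {i j : ι}

noncomputable def bernWeight (s : Finset ι) (p : ι → ℝ) (S : Finset ι) : ℝ :=
  (∏ l ∈ S, p l) * ∏ l ∈ s \ S, (1 - p l)

/-- `P(X ∈ A)` for `X` the number of successes among independent Bernoulli(`p l`) trials, `l ∈ s`. -/
noncomputable def cardProb (s : Finset ι) (p : ι → ℝ) (A : ℤ → Prop) [DecidablePred A] : ℝ :=
  ∑ S ∈ s.powerset with A #S, bernWeight s p S

noncomputable def binTail (s : Finset ι) (p : ι → ℝ) (k : ℤ) : ℝ :=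
  cardProb s p (k ≤ ·)

theorem binProbOn_eq_cardProb (t : ℤ) : binProbOn s p t = cardProb s p (· = t) := rfl

theorem binTail_eq_cardProb (k : ℤ) : binTail s p k = cardProb s p (k ≤ ·) := rfl

theorem cardProb_congr {A B : ℤ → Prop} [DecidablePred A] [DecidablePred B]
    (hpq : ∀ l ∈ s, p l = q l) (hAB : ∀ m, A m ↔ B m) : cardProb s p A = cardProb s q B := by
  refine sum_congr (filter_congr fun S _ => hAB _) fun S hS => ?_
  have hSs : S ⊆ s := mem_powerset.mp (mem_filter.mp hS).1
  unfold bernWeight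
  rw [prod_congr rfl fun l hl => hpq l (hSs hl),
    prod_congr rfl fun l hl => congrArg (1 - ·) (hpq l (mem_sdiff.mp hl).1)]

theorem bernWeight_nonneg (hp : ∀ l ∈ s, p l ∈ Set.Icc 0 1) {S : Finset ι} (hS : S ⊆ s) :
    0 ≤ bernWeight s p S :=
  mul_nonneg (prod_nonneg fun l hl => (hp l (hS hl)).1)
    (prod_nonneg fun l hl => sub_nonneg.mpr (hp l (mem_sdiff.mp hl).1).2)

theorem cardProb_nonneg (hp : ∀ l ∈ s, p l ∈ Set.Icc 0 1) (A : ℤ → Prop) [DecidablePred A] :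
    0 ≤ cardProb s p A :=
  sum_nonneg fun _ hS => bernWeight_nonneg hp (mem_powerset.mp (mem_filter.mp hS).1)

theorem binProbOn_nonneg (hp : ∀ l ∈ s, p l ∈ Set.Icc 0 1) (t : ℤ) : 0 ≤ binProbOn s p t :=
  cardProb_nonneg hp (· = t)

theorem binTail_nonneg (hp : ∀ l ∈ s, p l ∈ Set.Icc 0 1) (k : ℤ) : 0 ≤ binTail s p k :=
  cardProb_nonneg hp _

theorem bernWeight_insert_insert (hi : i ∉ u) {S : Finset ι} (hS : S ⊆ u) :
    bernWeight (insert i u) p (insert i S) = p i * bernWeight u p S := by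
  rw [bernWeight, bernWeight, insert_sdiff_insert, sdiff_insert_of_notMem hi,
    prod_insert fun h => hi (hS h)]
  ring

theorem bernWeight_insert (hi : i ∉ u) {S : Finset ι} (hS : S ⊆ u) :
    bernWeight (insert i u) p S = (1 - p i) * bernWeight u p S := by
  rw [bernWeight, bernWeight, insert_sdiff_of_notMem _ fun h => hi (hS h),
    prod_insert fun h => hi (mem_sdiff.mp h).1]
  ring

theorem cardProb_insert (hi : i ∉ u) (A : ℤ → Prop) [DecidablePred A] :
    cardProb (insert i u) p A =
      p i * cardProb u p (fun m => A (m + 1)) + (1 - p i) * cardProb u p A := by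
  simp only [cardProb, sum_filter, sum_powerset_insert hi, mul_sum, ← sum_add_distrib]
  refine sum_congr rfl fun S hS => ?_
  have hSu := mem_powerset.mp hS
  rw [card_insert_of_notMem fun h => hi (hSu h), bernWeight_insert_insert hi hSu,
    bernWeight_insert hi hSu]
  push_cast
  split_ifs <;> ring

theorem cardProb_eq_erase_erase (hij : i ≠ j) (hi : i ∈ s) (hj : j ∈ s)
    (A : ℤ → Prop) [DecidablePred A] :
    cardProb s p A =
      p i * p j * cardProb ((s.erase i).erase j) p (fun m => A (m + 2))
      + (p i + p j - 2 * (p i * p j)) * cardProb ((s.erase i).erase j) p (fun m => A (m + 1))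
      + (1 - p i) * (1 - p j) * cardProb ((s.erase i).erase j) p A := by
  have hj' : j ∈ s.erase i := mem_erase.mpr ⟨hij.symm, hj⟩
  conv_lhs => rw [← insert_erase hi, ← insert_erase hj']
  have hi' : i ∉ insert j ((s.erase i).erase j) := by simp [hij]
  rw [cardProb_insert hi', cardProb_insert (notMem_erase j _),
    cardProb_insert (notMem_erase j _)]
  simp only [add_assoc, one_add_one_eq_two]
  ring

theorem cardProb_sub_update_update (hij : i ≠ j) (hi : i ∈ s) (hj : j ∈ s) {a b : ℝ}
    (hab : a + b = p i + p j) (A : ℤ → Prop) [DecidablePred A] :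
    cardProb s p A - cardProb s (Function.update (Function.update p i a) j b) A =
      (p i * p j - a * b) * (cardProb ((s.erase i).erase j) p (fun m => A (m + 2))
        - 2 * cardProb ((s.erase i).erase j) p (fun m => A (m + 1))
        + cardProb ((s.erase i).erase j) p A) := by
  set q := Function.update (Function.update p i a) j b
  have hqi : q i = a := by simp [q, hij]
  have hqj : q j = b := by simp [q]
  have hqp {B : ℤ → Prop} [DecidablePred B] :
      cardProb ((s.erase i).erase j) q B = cardProb ((s.erase i).erase j) p B :=
    cardProb_congr (fun l hl => by simp_all [q]) fun _ => Iff.rfl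
  rw [cardProb_eq_erase_erase hij hi hj, cardProb_eq_erase_erase hij hi hj, hqi, hqj, hqp, hqp, hqp]
  linear_combination (cardProb ((s.erase i).erase j) p A
    - cardProb ((s.erase i).erase j) p (fun m => A (m + 1))) * hab

theorem binTail_eq_binProbOn_add (k : ℤ) :
    binTail s p k = binProbOn s p k + binTail s p (k + 1) := by
  simp only [binTail, cardProb, binProbOn_eq_cardProb, sum_filter, ← sum_add_distrib]
  refine sum_congr rfl fun S _ => ?_
  split_ifs <;> first | omega | simp

theorem tsum_ite_binProbOn (k : ℤ) :
    (∑' t : ℤ, if k ≤ t then binProbOn s p t else 0) = binTail s p k := by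
  have hcard {S : Finset ι} (hS : S ∈ s.powerset) : (#S : ℤ) ∈ Icc 0 (#s : ℤ) :=
    mem_Icc.mpr ⟨by positivity, by exact_mod_cast card_le_card (mem_powerset.mp hS)⟩
  rw [tsum_eq_sum (s := Icc 0 (#s : ℤ)), binTail, cardProb, sum_filter,
    ← sum_fiberwise_of_maps_to (g := fun S => (#S : ℤ)) fun S hS => hcard hS]
  · refine sum_congr rfl fun t _ => ?_
    rw [← sum_filter]
    split_ifs with hkt
    · rw [filter_true_of_mem fun S hS => by rw [(mem_filter.mp hS).2]; exact hkt]
      rfl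
    · rw [filter_false_of_mem fun S hS => by rw [(mem_filter.mp hS).2]; exact hkt,
        sum_empty]
  · intro t ht
    rw [binProbOn_eq_cardProb, cardProb, sum_eq_zero fun S hS =>
      absurd (by rw [← (mem_filter.mp hS).2]; exact hcard (mem_filter.mp hS).1) ht,
      ite_self]

theorem binTail_le_exp (hp : ∀ l ∈ s, p l ∈ Set.Icc 0 1) {c : ℝ} (hc : 0 ≤ c) (m : ℤ) :
    binTail s p m ≤ exp (-(c * m) + (∑ l ∈ s, p l) * (exp c - 1)) := by
  calc binTail s p m
      ≤ ∑ S ∈ s.powerset, exp (c * (#S - m)) * bernWeight s p S := by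
        rw [binTail, cardProb, sum_filter]
        refine sum_le_sum fun S hS => ?_
        have hw := bernWeight_nonneg hp (mem_powerset.mp hS)
        split_ifs with hm
        · have : (m : ℝ) ≤ #S := by exact_mod_cast hm
          exact le_mul_of_one_le_left hw (one_le_exp (by nlinarith))
        · positivity
    _ = exp (-(c * m)) * ∏ l ∈ s, (p l * exp c + (1 - p l)) := by
        rw [prod_add, mul_sum]
        refine sum_congr rfl fun S _ => ?_
        rw [bernWeight, prod_mul_distrib, prod_const, ← exp_nat_mul,
          show c * (#S - m) = -(c * m) + #S * c by ring, exp_add]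
        ring
    _ ≤ exp (-(c * m)) * ∏ l ∈ s, exp (p l * (exp c - 1)) := by
        gcongr with l hl
        · exact fun l hl => by nlinarith [(hp l hl).1, (hp l hl).2, exp_pos c]
        · linarith [add_one_le_exp (p l * (exp c - 1))]
    _ = exp (-(c * m) + (∑ l ∈ s, p l) * (exp c - 1)) := by
        rw [← exp_sum, ← exp_add, ← sum_mul]

theorem cardProb_add_eq (n t : ℤ) : cardProb s p (fun m => m + n = t) = binProbOn s p (t - n) :=
  (cardProb_congr (fun _ _ => rfl) fun _ => by omega).trans (binProbOn_eq_cardProb _).symm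

theorem cardProb_le_add (n k : ℤ) : cardProb s p (fun m => k ≤ m + n) = binTail s p (k - n) :=
  cardProb_congr (fun _ _ => rfl) fun _ => by omega

theorem abs_binProbOn_sub_update_update_le (hij : i ≠ j) (hi : i ∈ s) (hj : j ∈ s)
    (hp : ∀ l ∈ s, p l ∈ Set.Icc 0 1) {a b : ℝ} (hab : a + b = p i + p j) (k : ℤ) :
    |binProbOn s p k - binProbOn s (Function.update (Function.update p i a) j b) k| ≤
      2 * |p i * p j - a * b| * binTail ((s.erase i).erase j) p (k - 2) := by
  rw [binProbOn_eq_cardProb, binProbOn_eq_cardProb, cardProb_sub_update_update hij hi hj hab]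
  simp only [cardProb_add_eq, ← binProbOn_eq_cardProb, abs_mul]
  set r := (s.erase i).erase j
  have hpr : ∀ l ∈ r, p l ∈ Set.Icc 0 1 := fun l hl =>
    hp l (mem_of_mem_erase (mem_of_mem_erase hl))
  have h2 := binTail_eq_binProbOn_add (s := r) (p := p) (k - 2)
  have h1 := binTail_eq_binProbOn_add (s := r) (p := p) (k - 1)
  have h0 := binTail_eq_binProbOn_add (s := r) (p := p) k
  rw [show k - 2 + 1 = k - 1 by ring] at h2
  rw [show k - 1 + 1 = k by ring] at h1
  have := binProbOn_nonneg hpr (k - 2)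
  have := binProbOn_nonneg hpr (k - 1)
  have := binProbOn_nonneg hpr k
  have := binTail_nonneg hpr (k + 1)
  have hsecond : |binProbOn r p (k - 2) - 2 * binProbOn r p (k - 1) + binProbOn r p k| ≤
      2 * binTail r p (k - 2) := abs_le.mpr ⟨by linarith, by linarith⟩
  calc _ ≤ |p i * p j - a * b| * (2 * binTail r p (k - 2)) := by gcongr
    _ = _ := by ring

theorem abs_binTail_sub_update_update_le (hij : i ≠ j) (hi : i ∈ s) (hj : j ∈ s)
    (hp : ∀ l ∈ s, p l ∈ Set.Icc 0 1) {a b : ℝ} (hab : a + b = p i + p j) (k : ℤ) :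
    |binTail s p k - binTail s (Function.update (Function.update p i a) j b) k| ≤
      |p i * p j - a * b| * binTail ((s.erase i).erase j) p (k - 2) := by
  rw [binTail_eq_cardProb, binTail_eq_cardProb, cardProb_sub_update_update hij hi hj hab]
  simp only [cardProb_le_add, ← binTail_eq_cardProb, abs_mul]
  set r := (s.erase i).erase j
  have hpr : ∀ l ∈ r, p l ∈ Set.Icc 0 1 := fun l hl =>
    hp l (mem_of_mem_erase (mem_of_mem_erase hl))
  have h2 := binTail_eq_binProbOn_add (s := r) (p := p) (k - 2)
  have h1 := binTail_eq_binProbOn_add (s := r) (p := p) (k - 1)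
  rw [show k - 2 + 1 = k - 1 by ring] at h2
  rw [show k - 1 + 1 = k by ring] at h1
  have := binProbOn_nonneg hpr (k - 2)
  have := binProbOn_nonneg hpr (k - 1)
  have := binTail_nonneg hpr k
  have hsecond : |binTail r p (k - 2) - 2 * binTail r p (k - 1) + binTail r p k| ≤
      binTail r p (k - 2) := abs_le.mpr ⟨by linarith, by linarith⟩
  gcongr

noncomputable def bennettTail (d x : ℝ) : ℝ := exp (-(d * bennettH (max ((x - d) / d) 0)))

theorem binTail_le_bennettTail (hp : ∀ l ∈ s, p l ∈ Set.Icc 0 1) {d : ℝ} (hd : 0 < d)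
    (hsum : ∑ l ∈ s, p l ≤ d) (m : ℤ) :
    binTail s p m ≤ bennettTail d m := by
  rcases le_or_gt (m : ℝ) d with hm | hm
  · have h0 : max ((m - d) / d) 0 = 0 :=
      max_eq_right (div_nonpos_of_nonpos_of_nonneg (by linarith) hd.le)
    simpa [bennettTail, h0, bennettH] using binTail_le_exp hp le_rfl m
  · -- the optimal Chernoff parameter is `log (m / d)`
    have hr : 1 < m / d := (one_lt_div hd).mpr hm
    refine (binTail_le_exp hp (log_pos hr).le m).trans (exp_le_exp.mpr ?_)
    have hbennett : -(d * bennettH ((m - d) / d)) = -(log (m / d) * m) + d * (m / d - 1) := by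
      rw [bennettH, show 1 + (m - d) / d = m / d by field_simp; ring]
      field_simp
      ring
    rw [max_eq_left (div_nonneg (by linarith) hd.le), hbennett, exp_log (by linarith)]
    gcongr

end Bernoulli

theorem exists_lt_and_gt_of_sum_eq {ι : Type*} [Fintype ι] {q : ι → ℝ} {c : ℝ}
    (hsum : ∑ l, q l = Fintype.card ι * c)
    (hne : ∃ l, q l ≠ c) : ∃ i j, q i < c ∧ c < q j := by
  obtain ⟨l, hl⟩ := hne
  have hsum' : ∑ l, (q l - c) = 0 := by rw [sum_sub_distrib, hsum]; simp
  obtain ⟨i, -, hi⟩ := exists_pos_of_sum_zero_of_exists_nonzero (fun l => c - q l)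
    (by rw [sum_sub_distrib, hsum]; simp) ⟨l, mem_univ l, sub_ne_zero.mpr hl.symm⟩
  obtain ⟨j, -, hj⟩ := exists_pos_of_sum_zero_of_exists_nonzero (fun l => q l - c)
    hsum' ⟨l, mem_univ l, sub_ne_zero.mpr hl⟩
  exact ⟨i, j, sub_pos.mp hi, sub_pos.mp hj⟩

section Replacement

variable {ι : Type*} [DecidableEq ι] {q : ι → ℝ} {i j : ι} {c : ℝ}

def replacePair (q : ι → ℝ) (i j : ι) (c : ℝ) : ι → ℝ :=
  Function.update (Function.update q i c) j (q i + q j - c)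

theorem replacePair_mem_Icc {M : ℝ} (hq : ∀ l, q l ∈ Set.Icc 0 M) (hc : c ∈ Set.Icc 0 M)
    (hi : q i < c) (hj : c < q j) (l : ι) : replacePair q i j c l ∈ Set.Icc 0 M := by
  have hij : i ≠ j := by rintro rfl; linarith
  unfold replacePair
  rcases eq_or_ne l j with rfl | hlj
  · rw [Function.update_self]
    constructor <;> linarith [(hq i).1, (hq l).2]
  · rw [Function.update_of_ne hlj]
    rcases eq_or_ne l i with rfl | hli
    · rwa [Function.update_self]
    · rw [Function.update_of_ne hli]
      exact hq l

theorem card_filter_replacePair_ne_lt [Fintype ι] (hi : q i < c) (hj : c < q j) :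
    #{l | replacePair q i j c l ≠ c} < #{l | q l ≠ c} := by
  have hij : i ≠ j := by rintro rfl; linarith
  refine card_lt_card ((ssubset_iff_of_subset fun l hl => ?_).mpr
    ⟨i, by simp [hi.ne], fun h => (mem_filter.mp h).2 (by simp [replacePair, hij])⟩)
  simp only [mem_filter, mem_univ, true_and] at hl ⊢
  rcases eq_or_ne l j with rfl | hlj
  · exact hj.ne'
  rcases eq_or_ne l i with rfl | hli
  · simp [replacePair, hlj] at hl
  · simpa [replacePair, hlj, hli] using hl

theorem sum_replacePair [Fintype ι] (hij : i ≠ j) :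
    ∑ l, replacePair q i j c l = ∑ l, q l := by
  have : replacePair q i j c = q + Pi.single i (c - q i) + Pi.single j (q i - c) := by
    ext l
    rcases eq_or_ne l j with rfl | hlj
    · simp [replacePair, hij.symm]
      ring
    · rcases eq_or_ne l i with rfl | hli <;> simp [replacePair, *]
  simp only [this, Pi.add_apply, sum_add_distrib, sum_pi_single', mem_univ, if_true]
  ring

end Replacement

theorem abs_sub_const_le_card_mul_of_replacePair {ι : Type*} [Fintype ι] [DecidableEq ι]
    (F : (ι → ℝ) → ℝ) {c M B : ℝ} (hc : c ∈ Set.Icc 0 M)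
    (hF : ∀ q, (∀ l, q l ∈ Set.Icc 0 M) → ∑ l, q l = Fintype.card ι * c → ∀ i j, q i < c →
      c < q j → |F q - F (replacePair q i j c)| ≤ B)
    (q : ι → ℝ) (hq : ∀ l, q l ∈ Set.Icc 0 M) (hsum : ∑ l, q l = Fintype.card ι * c) :
    |F q - F (fun _ => c)| ≤ #{l | q l ≠ c} * B := by
  obtain ⟨N, hN⟩ : ∃ N, #{l | q l ≠ c} = N := ⟨_, rfl⟩
  induction N using Nat.strong_induction_on generalizing q with
  | _ N ih =>
    by_cases hconst : ∀ l, q l = c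
    · simp [funext hconst]
    push Not at hconst
    obtain ⟨i, j, hi, hj⟩ := exists_lt_and_gt_of_sum_eq hsum hconst
    have hij : i ≠ j := by rintro rfl; linarith
    have hstep := hF q hq hsum i j hi hj
    have hB : 0 ≤ B := (abs_nonneg _).trans hstep
    have hlt := card_filter_replacePair_ne_lt hi hj
    rw [hN] at hlt
    have hrest :=
      ih _ hlt _ (replacePair_mem_Icc hq hc hi hj) ((sum_replacePair hij).trans hsum) rfl
    calc |F q - F (fun _ => c)|
        ≤ |F q - F (replacePair q i j c)| + |F (replacePair q i j c) - F (fun _ => c)| :=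
          abs_sub_le _ _ _
      _ ≤ B + #{l | replacePair q i j c l ≠ c} * B := add_le_add hstep hrest
      _ ≤ #{l | q l ≠ c} * B := by
          rw [hN, ← one_add_mul]
          exact mul_le_mul_of_nonneg_right (by exact_mod_cast Nat.one_add_le_iff.mpr hlt) hB

theorem abs_mul_sub_mul_add_sub_le {x y c M : ℝ} (hx : 0 ≤ x) (hxc : x < c) (hcy : c < y)
    (hyM : y ≤ M) : |x * y - c * (x + y - c)| ≤ c * M := by
  rw [show x * y - c * (x + y - c) = -((c - x) * (y - c)) by ring, abs_neg,
    abs_of_nonneg (by nlinarith)]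
  exact mul_le_mul (by linarith) (by linarith) (by linarith) (by linarith)

section ReplacementStep

variable {ι : Type*} [Fintype ι] [DecidableEq ι] {q : ι → ℝ} {i j : ι} {c d M : ℝ}

theorem replacePair_defect_mul_binTail_le (hq : ∀ l, q l ∈ Set.Icc 0 1) (hd : 0 < d)
    (hsum : ∑ l, q l ≤ d) (hi : q i < c) (hj : c < q j) (hjM : q j ≤ M) (k : ℤ) :
    |q i * q j - c * (q i + q j - c)| * binTail ((univ.erase i).erase j) q (k - 2) ≤
      c * M * bennettTail d (k - 2) := by
  have hT := binTail_le_bennettTail (s := (univ.erase i).erase j) (fun l _ => hq l) hd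
    ((sum_le_sum_of_subset_of_nonneg (subset_univ _) fun l _ _ => (hq l).1).trans hsum) (k - 2)
  push_cast at hT
  exact mul_le_mul (abs_mul_sub_mul_add_sub_le (hq i).1 hi hj hjM) hT
    (binTail_nonneg (fun l _ => hq l) _)
    (mul_nonneg (by linarith [(hq i).1]) (by linarith [(hq i).1]))

theorem abs_binProbOn_sub_replacePair_le (hq : ∀ l, q l ∈ Set.Icc 0 1) (hd : 0 < d)
    (hsum : ∑ l, q l ≤ d) (hi : q i < c) (hj : c < q j) (hjM : q j ≤ M) (k : ℤ) :
    |binProbOn univ q k - binProbOn univ (replacePair q i j c) k| ≤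
      2 * (c * M * bennettTail d (k - 2)) := by
  have hij : i ≠ j := by rintro rfl; linarith
  refine (abs_binProbOn_sub_update_update_le hij (mem_univ i) (mem_univ j) (fun l _ => hq l)
    (by ring) k).trans ?_
  linarith [replacePair_defect_mul_binTail_le hq hd hsum hi hj hjM k]

theorem abs_binTail_sub_replacePair_le (hq : ∀ l, q l ∈ Set.Icc 0 1) (hd : 0 < d)
    (hsum : ∑ l, q l ≤ d) (hi : q i < c) (hj : c < q j) (hjM : q j ≤ M) (k : ℤ) :
    |binTail univ q k - binTail univ (replacePair q i j c) k| ≤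
      c * M * bennettTail d (k - 2) := by
  have hij : i ≠ j := by rintro rfl; linarith
  exact (abs_binTail_sub_update_update_le hij (mem_univ i) (mem_univ j) (fun l _ => hq l)
    (by ring) k).trans (replacePair_defect_mul_binTail_le hq hd hsum hi hj hjM k)

end ReplacementStep

theorem stmt_15_general (n : ℕ) (p : Fin n → ℝ)
    (hp : ∀ l, 0 ≤ p l ∧ p l ≤ 1)
    (d pmax : ℝ) (hd : d = ∑ l, p l) (hd0 : 0 < d)
    (hpmax : ∀ l, p l ≤ pmax) (k : ℤ) :
    |binProbOn Finset.univ p k - binProbOn Finset.univ (fun _ : Fin n => d / n) k| ≤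
        2 * d * pmax * Real.exp (-(d * bennettH (max (((k : ℝ) - 2 - d) / d) 0))) ∧
    |(∑' t : ℤ, if k ≤ t then binProbOn Finset.univ p t else 0)
        - ∑' t : ℤ, if k ≤ t then binProbOn Finset.univ (fun _ : Fin n => d / n) t else 0| ≤
      d * pmax * Real.exp (-(d * bennettH (max (((k : ℝ) - 2 - d) / d) 0))) := by
  have hn : (0 : ℝ) < n := by
    rcases Nat.eq_zero_or_pos n with rfl | hn
    · simp only [univ_eq_empty, sum_empty] at hd
      linarith
    · exact_mod_cast hn
  set c := d / n
  set E := bennettTail d (k - 2)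
  have hnc : n * c = d := mul_div_cancel₀ d hn.ne'
  have hsum : ∑ l, p l = Fintype.card (Fin n) * c := by rw [Fintype.card_fin, hnc, hd]
  have hpM : ∀ l, p l ∈ Set.Icc 0 (min 1 pmax) := fun l => ⟨(hp l).1, le_min (hp l).2 (hpmax l)⟩
  have hc : c ∈ Set.Icc 0 (min 1 pmax) := by
    refine ⟨by positivity, (div_le_iff₀' hn).mpr ?_⟩
    simpa [hd] using sum_le_card_nsmul univ p _ fun l _ => (hpM l).2
  have hcount : (#{l | p l ≠ c} : ℝ) ≤ n := by
    exact_mod_cast (card_filter_le _ _).trans (card_fin n).le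
  have hB : 0 ≤ c * pmax * E :=
    mul_nonneg (mul_nonneg hc.1 (hc.1.trans (hc.2.trans (min_le_right _ _)))) (exp_pos _).le
  have h01 {q : Fin n → ℝ} (hq : ∀ l, q l ∈ Set.Icc 0 (min 1 pmax)) : ∀ l, q l ∈ Set.Icc 0 1 :=
    fun l => ⟨(hq l).1, (hq l).2.trans (min_le_left _ _)⟩
  have hsum_le {q : Fin n → ℝ} (hs : ∑ l, q l = Fintype.card (Fin n) * c) : ∑ l, q l ≤ d :=
    (hs.trans (by rw [Fintype.card_fin, hnc])).le
  constructor
  · calc _ ≤ #{l | p l ≠ c} * (2 * (c * pmax * E)) :=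
          abs_sub_const_le_card_mul_of_replacePair (fun q => binProbOn univ q k) hc
            (fun q hq hs i j hi hj => abs_binProbOn_sub_replacePair_le (h01 hq) hd0 (hsum_le hs)
              hi hj ((hq j).2.trans (min_le_right _ _)) k) p hpM hsum
      _ ≤ n * (2 * (c * pmax * E)) := by gcongr
      _ = 2 * d * pmax * E := by rw [← hnc]; ring
  · rw [tsum_ite_binProbOn, tsum_ite_binProbOn]
    calc _ ≤ #{l | p l ≠ c} * (c * pmax * E) :=
          abs_sub_const_le_card_mul_of_replacePair (fun q => binTail univ q k) hc
            (fun q hq hs i j hi hj => abs_binTail_sub_replacePair_le (h01 hq) hd0 (hsum_le hs)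
              hi hj ((hq j).2.trans (min_le_right _ _)) k) p hpM hsum
      _ ≤ n * (c * pmax * E) := by gcongr
      _ = d * pmax * E := by rw [← hnc]; ring

theorem stmt_15 (n : ℕ) (p : Fin n → ℝ)
    (hp : ∀ l, 0 ≤ p l ∧ p l ≤ 1)
    (d pmax : ℝ) (hd : d = ∑ l, p l) (hd0 : 0 < d)
    (hpmax : ∀ l, p l ≤ pmax) (hpmax' : ∃ l, p l = pmax) (k : ℤ) :
    |binProbOn Finset.univ p k - binProbOn Finset.univ (fun _ : Fin n => d / n) k| ≤
        2 * d * pmax * Real.exp (-(d * bennettH (max (((k : ℝ) - 2 - d) / d) 0))) ∧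
    |(∑' t : ℤ, if k ≤ t then binProbOn Finset.univ p t else 0)
        - ∑' t : ℤ, if k ≤ t then binProbOn Finset.univ (fun _ : Fin n => d / n) t else 0| ≤
      d * pmax * Real.exp (-(d * bennettH (max (((k : ℝ) - 2 - d) / d) 0))) :=
  stmt_15_general n p hp d pmax hd hd0 hpmax k
end

section
/- There is a universal constant C > 0 such that the following holds. Let X ~ Bin(p_1,…,p_n) with d = Σ p_i > 0 and p_max = max_i p_i ≥ d/n, and let Y ~ Poisson(d). Then for every integer k with 2d ≤ k ≤ (d/p_max)^{2/5}/C, |P(X = k)/P(Y = k) − 1| ≤ C p_max k^{5/2} / d. -/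
open Finset Real

set_option maxHeartbeats 4000000

/-- The probability that a Poisson(d) random variable equals `k`. -/
noncomputable def poissonProb (d : ℝ) (k : ℕ) : ℝ :=
  Real.exp (-d) * d ^ k / (Nat.factorial k : ℝ)



noncomputable def esymF {ι : Type*} [DecidableEq ι] (s : Finset ι) (p : ι → ℝ) (k : ℕ) : ℝ :=
  ∑ S ∈ s.powersetCard k, ∏ l ∈ S, p l

section esym
variable {ι : Type*} [DecidableEq ι] {p : ι → ℝ}

lemma esymF_zero (s : Finset ι) : esymF s p 0 = 1 := by
  simp [esymF]

lemma esymF_empty (k : ℕ) : esymF (∅ : Finset ι) p (k+1) = 0 := by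
  rw [esymF, Finset.powersetCard_eq_empty.mpr (by simp), Finset.sum_empty]

lemma esymF_insert {a : ι} {s : Finset ι} (ha : a ∉ s) (k : ℕ) :
    esymF (insert a s) p (k+1) = esymF s p (k+1) + p a * esymF s p k := by
  rw [esymF, powersetCard_succ_insert ha, Finset.sum_union, esymF, esymF, Finset.mul_sum]
  · congr 1
    rw [Finset.sum_image]
    · exact Finset.sum_congr rfl fun S hS =>
        Finset.prod_insert (fun h => ha ((mem_powersetCard.mp hS).1 h))
    · intro S hS T hT hST
      have hS' : a ∉ S := fun h => ha ((mem_powersetCard.mp hS).1 h)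
      have hT' : a ∉ T := fun h => ha ((mem_powersetCard.mp hT).1 h)
      rw [← Finset.erase_insert hS', ← Finset.erase_insert hT', hST]
  · rw [Finset.disjoint_left]
    intro S hS hS'
    obtain ⟨T, hT, rfl⟩ := Finset.mem_image.mp hS'
    exact ha ((mem_powersetCard.mp hS).1 (Finset.mem_insert_self a T))

lemma esymF_nonneg (hp : ∀ l, 0 ≤ p l) (s : Finset ι) (k : ℕ) : 0 ≤ esymF s p k :=
  Finset.sum_nonneg fun S _ => Finset.prod_nonneg fun l _ => hp l

end esym

lemma pow_lb (x y : ℝ) (hx : 0 ≤ x) (hy : 0 ≤ y) :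
    ∀ m : ℕ, x^(m+1) + ((m:ℝ)+1)*y*x^m ≤ (x+y)^(m+1) := by
  intro m
  induction m with
  | zero => norm_num
  | succ m ih =>
    have h2 : (x+y) * (x^(m+1) + ((m:ℝ)+1)*y*x^m) ≤ (x+y) * (x+y)^(m+1) :=
      mul_le_mul_of_nonneg_left ih (by linarith)
    have hxm : 0 ≤ x^m := pow_nonneg hx m
    push_cast
    simp only [pow_succ] at h2 ⊢
    nlinarith [mul_nonneg (mul_nonneg hy hy) hxm]

lemma pow_ub (x y : ℝ) (hx : 0 ≤ x) (hy : 0 ≤ y) :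
    ∀ m : ℕ, (x+y)^(m+2) ≤ x^(m+2) + ((m:ℝ)+2)*y*x^(m+1)
      + (((m:ℝ)+2)*((m:ℝ)+1)/2)*y^2*(x+y)^m := by
  intro m
  induction m with
  | zero => norm_num; nlinarith
  | succ m ih =>
    have h2 : (x+y) * (x+y)^(m+2) ≤
        (x+y) * (x^(m+2) + ((m:ℝ)+2)*y*x^(m+1) + (((m:ℝ)+2)*((m:ℝ)+1)/2)*y^2*(x+y)^m) :=
      mul_le_mul_of_nonneg_left ih (by linarith)
    have hxy : x^(m+1) ≤ (x+y)^(m+1) := pow_le_pow_left₀ hx (by linarith) _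
    have hxm : 0 ≤ x^m := pow_nonneg hx m
    have hint := mul_le_mul_of_nonneg_left hxy
      (mul_nonneg (mul_nonneg (by positivity : (0:ℝ) ≤ ((m:ℝ)+2)) hy) hy)
    push_cast
    simp only [pow_succ] at h2 hint ⊢
    nlinarith [hint, h2]

section esym2
variable {ι : Type*} [DecidableEq ι] {p : ι → ℝ}

lemma factorial_mul_esymF_le (hp : ∀ l, 0 ≤ p l) (s : Finset ι) :
    ∀ k, (k.factorial : ℝ) * esymF s p k ≤ (∑ l ∈ s, p l)^k := by
  induction s using Finset.induction_on with
  | empty =>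
    intro k
    cases k with
    | zero => simp [esymF_zero]
    | succ k => simp [esymF_empty]
  | @insert a s ha ih =>
    intro k
    cases k with
    | zero => simp [esymF_zero]
    | succ k =>
      rw [esymF_insert ha, Finset.sum_insert ha]
      have h1 := ih (k+1)
      have h2 := ih k
      have hq : 0 ≤ p a := hp a
      have hT : 0 ≤ ∑ l ∈ s, p l := Finset.sum_nonneg fun l _ => hp l
      have hlb := pow_lb (∑ l ∈ s, p l) (p a) hT hq k
      have h2' : ((k:ℝ)+1) * (p a) * ((k.factorial:ℝ) * esymF s p k)
          ≤ ((k:ℝ)+1) * (p a) * (∑ l ∈ s, p l)^k :=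
        mul_le_mul_of_nonneg_left h2 (by positivity)
      have hf : ((k+1).factorial : ℝ) = ((k:ℝ)+1) * (k.factorial : ℝ) := by
        rw [Nat.factorial_succ]; push_cast; ring
      rw [hf] at h1 ⊢
      rw [add_comm (p a) (∑ l ∈ s, p l)]
      linarith

lemma le_factorial_mul_esymF (hp : ∀ l, 0 ≤ p l) (s : Finset ι) :
    ∀ k, (∑ l ∈ s, p l)^k ≤ (k.factorial : ℝ) * esymF s p k
      + ((k:ℝ)*((k:ℝ)-1)/2) * (∑ l ∈ s, (p l)^2) * (∑ l ∈ s, p l)^(k-2) := by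
  induction s using Finset.induction_on with
  | empty =>
    intro k
    cases k with
    | zero => simp [esymF_zero]
    | succ k => simp [esymF_empty]
  | @insert a s ha ih =>
    have hq : 0 ≤ p a := hp a
    have hT : 0 ≤ ∑ l ∈ s, p l := Finset.sum_nonneg fun l _ => hp l
    have hQ : 0 ≤ ∑ l ∈ s, (p l)^2 := Finset.sum_nonneg fun l _ => sq_nonneg _
    intro k
    rw [Finset.sum_insert ha, Finset.sum_insert ha]
    rcases k with _ | (_ | (_ | m))
    · norm_num [esymF_zero]
    · have i1 := ih 1
      rw [esymF_insert ha]
      norm_num [esymF_zero] at i1 ⊢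
      linarith
    · have i1 := ih 1
      have i2 := ih 2
      rw [esymF_insert ha]
      norm_num [esymF_zero] at i1 i2 ⊢
      nlinarith [mul_le_mul_of_nonneg_left i1 hq]
    · have i3 := ih (m+3)
      have i2 := ih (m+2)
      have e1 : m+3-2 = m+1 := by omega
      have e2 : m+2-2 = m := by omega
      have e3 : m+1+1+1 = m+3 := by omega
      rw [e3, esymF_insert ha]
      rw [e1] at i3 ⊢
      rw [e2] at i2
      have hf : ((m+3).factorial : ℝ) = ((m:ℝ)+3) * ((m+2).factorial : ℝ) := by
        rw [show m+3 = (m+2)+1 from rfl, Nat.factorial_succ]; push_cast; ring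
      rw [hf] at i3 ⊢
      have hA := pow_ub (∑ l ∈ s, p l) (p a) hT hq (m+1)
      have hB := pow_lb (∑ l ∈ s, p l) (p a) hT hq m
      have hB' := mul_le_mul_of_nonneg_left hB
        (show (0:ℝ) ≤ (((m:ℝ)+3)*((m:ℝ)+2)/2) * (∑ l ∈ s, (p l)^2) by positivity)
      have i2' := mul_le_mul_of_nonneg_left i2
        (show (0:ℝ) ≤ (((m:ℝ))+3) * p a by positivity)
      rw [add_comm (p a) (∑ l ∈ s, p l)]
      push_cast at i3 i2' hA hB' ⊢
      linarith

end esym2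

lemma binProbOn_natCast {ι : Type*} [DecidableEq ι] (s : Finset ι) (p : ι → ℝ) (k : ℕ) :
    binProbOn s p (k : ℤ) =
      ∑ S ∈ s.powersetCard k, (∏ l ∈ S, p l) * ∏ l ∈ s \ S, (1 - p l) := by
  rw [binProbOn, Finset.powersetCard_eq_filter]
  congr 1
  apply Finset.filter_congr
  intro S _
  exact_mod_cast Iff.rfl

lemma exp_quad_le (q : ℝ) (h0 : 0 ≤ q) (h1 : q ≤ 1/4) : Real.exp (-(q + q^2)) ≤ 1 - q := by
  set x := q + q^2 with hx
  have hx0 : 0 ≤ x := by positivity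
  have hh : 1 + x/2 ≤ Real.exp (x/2) := by
    have := Real.add_one_le_exp (x/2); linarith
  have he : (1 + x/2)^2 ≤ Real.exp x := by
    have h2 : Real.exp x = Real.exp (x/2) ^ 2 := by
      rw [sq, ← Real.exp_add]; ring_nf
    rw [h2]
    exact pow_le_pow_left₀ (by linarith) hh 2
  have hone : 1 ≤ (1 - q) * Real.exp x := by
    have : 1 ≤ (1 - q) * (1 + x/2)^2 := by
      rw [hx]
      nlinarith [sq_nonneg q, mul_nonneg (mul_nonneg h0 h0) h0, sq_nonneg (q*q),
        mul_nonneg (mul_nonneg (mul_nonneg h0 h0) h0) h0]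
    have h1q : (0:ℝ) ≤ 1 - q := by linarith
    nlinarith [mul_le_mul_of_nonneg_left he h1q]
  have hmul : Real.exp (-x) * Real.exp x = 1 := by
    rw [← Real.exp_add]; simp
  nlinarith [Real.exp_pos x, Real.exp_pos (-x), hone, hmul]

theorem stmt_16 : ∃ C : ℝ, 0 < C ∧
    ∀ (n : ℕ) (p : Fin n → ℝ), (∀ l, 0 ≤ p l ∧ p l ≤ 1) →
    ∀ d pmax : ℝ, d = ∑ l, p l → 0 < d →
    (∀ l, p l ≤ pmax) → (∃ l, p l = pmax) → d / n ≤ pmax →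
    ∀ k : ℕ, 2 * d ≤ k → (k : ℝ) ≤ (d / pmax) ^ ((2 : ℝ) / 5) / C →
    |binProbOn Finset.univ p (k : ℤ) / poissonProb d k - 1| ≤
      C * pmax * (k : ℝ) ^ ((5 : ℝ) / 2) / d := by
  refine ⟨100, by norm_num, ?_⟩
  intro n p hp01 d pmax hd hd0 hple hex _hdn k h2d hkC
  have hp : ∀ l, 0 ≤ p l := fun l => (hp01 l).1
  have hp1 : ∀ l, p l ≤ 1 := fun l => (hp01 l).2
  obtain ⟨l₀, hl₀⟩ := hex
  have hpm0 : 0 ≤ pmax := hl₀ ▸ hp l₀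
  have hdle : d ≤ n * pmax := by
    rw [hd]
    calc ∑ l, p l ≤ ∑ _l : Fin n, pmax := Finset.sum_le_sum fun l _ => hple l
    _ = n * pmax := by rw [Finset.sum_const, Finset.card_univ, Fintype.card_fin, nsmul_eq_mul]
  have hpm : 0 < pmax := by
    rcases hpm0.lt_or_eq with h | h
    · exact h
    · exfalso; rw [← h, mul_zero] at hdle; linarith
  have hk0 : (0:ℝ) < k := by linarith
  have hk1n : 1 ≤ k := Nat.one_le_iff_ne_zero.mpr (by rintro rfl; norm_num at hk0)
  have hk1 : (1:ℝ) ≤ (k:ℝ) := by exact_mod_cast hk1n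
  have hk0' : (0:ℝ) ≤ (k:ℝ) := hk0.le
  set K := (k:ℝ)^((5:ℝ)/2) with hK
  have hK1 : 1 ≤ K := by
    rw [hK, show (1:ℝ) = (1:ℝ)^((5:ℝ)/2) by simp]
    exact Real.rpow_le_rpow (by norm_num) hk1 (by norm_num)
  have hK0 : (0:ℝ) < K := lt_of_lt_of_le one_pos hK1
  have hKk : (k:ℝ) ≤ K := by
    calc (k:ℝ) = (k:ℝ)^((1:ℝ)) := (Real.rpow_one _).symm
    _ ≤ K := Real.rpow_le_rpow_of_exponent_le hk1 (by norm_num)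
  have hK2 : (k:ℝ)^2 ≤ K := by
    calc (k:ℝ)^2 = (k:ℝ)^((2:ℕ):ℝ) := by rw [Real.rpow_natCast]
    _ ≤ K := Real.rpow_le_rpow_of_exponent_le hk1 (by norm_num)
  have hdp0 : 0 ≤ d / pmax := by positivity
  have h100k : (100:ℝ) * k ≤ (d/pmax)^((2:ℝ)/5) := by linarith only [hkC]
  have hkey : pmax * (100000*K) ≤ d := by
    have h2 : ((100:ℝ)*k)^((5:ℝ)/2) ≤ ((d/pmax)^((2:ℝ)/5))^((5:ℝ)/2) :=
      Real.rpow_le_rpow (by positivity) h100k (by norm_num)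
    have h3 : ((d/pmax)^((2:ℝ)/5))^((5:ℝ)/2) = d/pmax := by
      rw [← Real.rpow_mul hdp0]; norm_num
    have h4 : ((100:ℝ)*k)^((5:ℝ)/2) = 100000 * K := by
      rw [Real.mul_rpow (by norm_num) hk0']
      congr 1
      rw [show (100:ℝ) = (10:ℝ)^(2:ℕ) by norm_num, ← Real.rpow_natCast (10:ℝ) 2,
        ← Real.rpow_mul (by norm_num)]
      rw [show ((2:ℕ):ℝ)*((5:ℝ)/2) = ((5:ℕ):ℝ) by push_cast; norm_num, Real.rpow_natCast]
      norm_num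
    rw [h4, h3] at h2
    have := (le_div_iff₀ hpm).mp h2
    linarith
  have hdk2 : d ≤ (k:ℝ)/2 := by linarith
  have hpm14 : pmax ≤ 1/200000 := by
    have hdK : d ≤ K/2 := by linarith
    nlinarith only [hkey, hK0, hdK]
  have hQ : ∑ l, (p l)^2 ≤ pmax * d := by
    calc ∑ l, (p l)^2 ≤ ∑ l, pmax * p l := Finset.sum_le_sum fun l _ => by
          rw [sq]; exact mul_le_mul_of_nonneg_right (hple l) (hp l)
    _ = pmax * d := by rw [← Finset.mul_sum, hd]
  have hP : 0 < poissonProb d k := by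
    rw [poissonProb]
    have : (0:ℝ) < (k.factorial : ℝ) := by exact_mod_cast k.factorial_pos
    positivity
  have hEub := factorial_mul_esymF_le hp Finset.univ k
  have hElb := le_factorial_mul_esymF hp Finset.univ k
  rw [← hd] at hEub hElb
  set c := (k:ℝ)*((k:ℝ)-1)/2 with hc
  have hc0 : 0 ≤ c := by rw [hc]; nlinarith [hk1]
  have hcK : c ≤ K/2 := by rw [hc]; nlinarith [hK2, hk1]
  set ε := c * pmax / d with hε
  have hε0 : 0 ≤ ε := by positivity
  have hεd : ε * d = c * pmax := by rw [hε]; field_simp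
  have hcp : c * pmax ≤ d/2 := by
    linarith only [mul_le_mul_of_nonneg_right hcK hpm0, hkey, hd0.le]
  have hεhalf : ε ≤ 1/2 := by
    by_contra hcon; push_neg at hcon
    have : d/2 < ε * d := by nlinarith only [hεd, hcp, hd0, hcon]
    linarith only [hεd ▸ this, hcp]
  -- lower bound on k! * E
  have hElb2 : d^k * (1 - ε) ≤ (k.factorial : ℝ) * esymF Finset.univ p k := by
    rcases Nat.lt_or_ge k 2 with hklt | hk2
    · have hkone : k = 1 := by omega
      subst hkone
      have hc1 : c = 0 := by rw [hc]; norm_num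
      have hε1 : ε = 0 := by rw [hε, hc1]; simp
      rw [hε1, sub_zero, mul_one]
      rw [hc1, zero_mul, zero_mul, add_zero] at hElb
      exact hElb
    · have hsplit : d^k = d^(k-2) * d^2 := by rw [← pow_add]; congr 1; omega
      have heεd : ε * d^k = c * pmax * d^(k-2) * d := by
        rw [hsplit, hε]; field_simp
      have hterm : c * (∑ l, (p l)^2) * d^(k-2) ≤ ε * d^k := by
        rw [heεd]
        calc c * (∑ l, (p l)^2) * d^(k-2) ≤ c * (pmax*d) * d^(k-2) :=
              mul_le_mul_of_nonneg_right (mul_le_mul_of_nonneg_left hQ hc0)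
                (pow_nonneg hd0.le _)
        _ = c * pmax * d^(k-2) * d := by ring
      nlinarith only [hElb, hterm]
  -- product bounds
  have hprod_ub : ∀ S ∈ Finset.powersetCard k (Finset.univ : Finset (Fin n)),
      (∏ l ∈ Finset.univ \ S, (1 - p l)) ≤ Real.exp ((k:ℝ)*pmax - d) := by
    intro S hS
    have hcard : S.card = k := (Finset.mem_powersetCard.mp hS).2
    have hsub : S ⊆ Finset.univ := (Finset.mem_powersetCard.mp hS).1
    calc ∏ l ∈ Finset.univ \ S, (1 - p l) ≤ ∏ l ∈ Finset.univ \ S, Real.exp (-(p l)) := by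
          apply Finset.prod_le_prod
          · intro l _; linarith only [hp1 l]
          · intro l _; linarith only [Real.add_one_le_exp (-(p l))]
    _ = Real.exp (∑ l ∈ Finset.univ \ S, -(p l)) := (Real.exp_sum _ _).symm
    _ ≤ Real.exp ((k:ℝ)*pmax - d) := by
          apply Real.exp_le_exp.mpr
          have hsd : ∑ l ∈ Finset.univ \ S, p l = d - ∑ l ∈ S, p l := by
            rw [Finset.sum_sdiff_eq_sub hsub, ← hd]
          have hSk : ∑ l ∈ S, p l ≤ (k:ℝ) * pmax := by
            have h := Finset.sum_le_card_nsmul S p pmax (fun l _ => hple l)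
            rw [hcard, nsmul_eq_mul] at h
            exact h
          rw [Finset.sum_neg_distrib, hsd]
          linarith
  have hprod_lb : ∀ S ∈ Finset.powersetCard k (Finset.univ : Finset (Fin n)),
      Real.exp (-(d + pmax*d)) ≤ ∏ l ∈ Finset.univ \ S, (1 - p l) := by
    intro S _hS
    calc Real.exp (-(d + pmax*d)) ≤ Real.exp (∑ l ∈ Finset.univ \ S, -(p l + (p l)^2)) := by
          apply Real.exp_le_exp.mpr
          rw [Finset.sum_neg_distrib]
          have h1 : ∑ l ∈ Finset.univ \ S, (p l + (p l)^2) ≤ ∑ l : Fin n, (p l + (p l)^2) :=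
            Finset.sum_le_sum_of_subset_of_nonneg (Finset.sdiff_subset)
              (fun l _ _ => add_nonneg (hp l) (sq_nonneg _))
          have h2 : ∑ l : Fin n, (p l + (p l)^2) = d + ∑ l, (p l)^2 := by
            rw [Finset.sum_add_distrib, hd]
          linarith only [hQ, h1, h2]
    _ = ∏ l ∈ Finset.univ \ S, Real.exp (-(p l + (p l)^2)) := Real.exp_sum _ _
    _ ≤ ∏ l ∈ Finset.univ \ S, (1 - p l) := by
          apply Finset.prod_le_prod (fun l _ => (Real.exp_pos _).le)
          intro l _
          exact exp_quad_le (p l) (hp l) (by linarith [hple l, hpm14])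
  have hfact_pos : (0:ℝ) < (k.factorial : ℝ) := by exact_mod_cast k.factorial_pos
  -- upper bound on binProb
  have hbin_ub : binProbOn Finset.univ p (k:ℤ) ≤ Real.exp ((k:ℝ)*pmax) * poissonProb d k := by
    rw [binProbOn_natCast]
    calc ∑ S ∈ Finset.powersetCard k (Finset.univ : Finset (Fin n)),
          (∏ l ∈ S, p l) * ∏ l ∈ Finset.univ \ S, (1 - p l)
        ≤ ∑ S ∈ Finset.powersetCard k (Finset.univ : Finset (Fin n)),
          (∏ l ∈ S, p l) * Real.exp ((k:ℝ)*pmax - d) :=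
          Finset.sum_le_sum fun S hS => mul_le_mul_of_nonneg_left (hprod_ub S hS)
            (Finset.prod_nonneg fun l _ => hp l)
    _ = Real.exp ((k:ℝ)*pmax - d) * esymF Finset.univ p k := by
          rw [esymF, Finset.mul_sum]
          exact Finset.sum_congr rfl fun S _ => mul_comm _ _
    _ ≤ Real.exp ((k:ℝ)*pmax - d) * (d^k / (k.factorial : ℝ)) := by
          apply mul_le_mul_of_nonneg_left _ (Real.exp_pos _).le
          rw [le_div_iff₀ hfact_pos]
          linarith only [hEub]
    _ = Real.exp ((k:ℝ)*pmax) * poissonProb d k := by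
          rw [poissonProb, show (k:ℝ)*pmax - d = (k:ℝ)*pmax + (-d) by ring, Real.exp_add]
          ring
  -- lower bound on binProb
  have hbin_lb : Real.exp (-(pmax*d)) * (1-ε) * poissonProb d k ≤ binProbOn Finset.univ p (k:ℤ) := by
    rw [binProbOn_natCast]
    have step1 : Real.exp (-(d+pmax*d)) * esymF Finset.univ p k ≤
        ∑ S ∈ Finset.powersetCard k (Finset.univ : Finset (Fin n)),
          (∏ l ∈ S, p l) * ∏ l ∈ Finset.univ \ S, (1 - p l) := by
      rw [esymF, Finset.mul_sum]
      apply Finset.sum_le_sum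
      intro S hS
      rw [mul_comm]
      exact mul_le_mul_of_nonneg_left (hprod_lb S hS) (Finset.prod_nonneg fun l _ => hp l)
    have step2 : Real.exp (-(d+pmax*d)) * (d^k*(1-ε) / (k.factorial : ℝ)) ≤
        Real.exp (-(d+pmax*d)) * esymF Finset.univ p k := by
      apply mul_le_mul_of_nonneg_left _ (Real.exp_pos _).le
      rw [div_le_iff₀ hfact_pos]
      linarith only [hElb2]
    have heq : Real.exp (-(pmax*d)) * (1-ε) * poissonProb d k =
        Real.exp (-(d+pmax*d)) * (d^k*(1-ε) / (k.factorial : ℝ)) := by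
      rw [poissonProb, show -(d+pmax*d) = -d + -(pmax*d) by ring, Real.exp_add]
      field_simp
    rw [heq]
    linarith only [step1, step2]
  have hub : binProbOn Finset.univ p (k:ℤ) / poissonProb d k ≤ Real.exp ((k:ℝ)*pmax) :=
    (div_le_iff₀ hP).mpr hbin_ub
  have hlb : Real.exp (-(pmax*d)) * (1-ε) ≤ binProbOn Finset.univ p (k:ℤ) / poissonProb d k :=
    (le_div_iff₀ hP).mpr hbin_lb
  -- numeric endgame
  have hx0 : 0 ≤ (k:ℝ)*pmax := by positivity
  have hA' : 200000 * ((k:ℝ)*pmax) * (k:ℝ) ≤ (k:ℝ) := by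
    nlinarith only [mul_le_mul_of_nonneg_left hK2 hpm0, hkey, h2d]
  have hxhalf : (k:ℝ)*pmax ≤ 1/2 := by nlinarith only [hA', hk0, hx0, hk1]
  have hexp_ub : Real.exp ((k:ℝ)*pmax) ≤ 1 + 2*((k:ℝ)*pmax) := by
    have h1 : Real.exp ((k:ℝ)*pmax) * (1 - (k:ℝ)*pmax) ≤ 1 := by
      have h2 := Real.add_one_le_exp (-((k:ℝ)*pmax))
      have h3 := mul_le_mul_of_nonneg_left h2 (Real.exp_pos ((k:ℝ)*pmax)).le
      rw [← Real.exp_add] at h3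
      simp only [add_neg_cancel, Real.exp_zero] at h3
      nlinarith only [h3]
    have hx1 : (0:ℝ) < 1 - (k:ℝ)*pmax := by linarith only [hxhalf]
    have h5 : (0:ℝ) ≤ ((k:ℝ)*pmax)*(1-2*((k:ℝ)*pmax)) :=
      mul_nonneg hx0 (by linarith only [hxhalf])
    have h4 : Real.exp ((k:ℝ)*pmax) * (1-(k:ℝ)*pmax) ≤ (1+2*((k:ℝ)*pmax))*(1-(k:ℝ)*pmax) := by
      nlinarith only [h1, h5]
    exact le_of_mul_le_mul_right h4 hx1
  have hexp_lb : 1 - pmax*d ≤ Real.exp (-(pmax*d)) := by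
    linarith only [Real.add_one_le_exp (-(pmax*d))]
  have h1 : binProbOn Finset.univ p (k:ℤ) / poissonProb d k - 1 ≤ 2*((k:ℝ)*pmax) :=
    by linarith only [hub, hexp_ub]
  have h2 : 2*((k:ℝ)*pmax) ≤ 100*pmax*K/d := by
    rw [le_div_iff₀ hd0]
    nlinarith only [mul_le_mul_of_nonneg_left hK2 hpm0, h2d, hk0,
      mul_le_mul_of_nonneg_left h2d (mul_nonneg hpm0 hk0'), mul_nonneg hpm0 hK0.le]
  have h3 : (1 - pmax*d) * (1 - ε) ≤ binProbOn Finset.univ p (k:ℤ) / poissonProb d k := by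
    have hmul := mul_le_mul_of_nonneg_right hexp_lb (by linarith only [hεhalf] : (0:ℝ) ≤ 1-ε)
    linarith only [hlb, hmul]
  have h4 : 1 - binProbOn Finset.univ p (k:ℤ) / poissonProb d k ≤ pmax*d + ε := by
    nlinarith only [h3, mul_nonneg (mul_nonneg hpm0 hd0.le) hε0]
  have h5 : pmax*d + ε ≤ 100*pmax*K/d := by
    rw [le_div_iff₀ hd0]
    have expand : (pmax*d + ε)*d = pmax*d^2 + c*pmax := by
      have h' : (pmax*d + ε)*d = pmax*d^2 + ε*d := by ring
      rw [h', hεd]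
    rw [expand]
    have hd2K : d^2 ≤ K/4 := by nlinarith only [hdk2, hd0.le, hK2, hk0']
    nlinarith only [mul_le_mul_of_nonneg_left hd2K hpm0,
      mul_le_mul_of_nonneg_right hcK hpm0, mul_nonneg hpm0 hK0.le]
  rw [abs_le]
  constructor
  · linarith only [h4, h5]
  · linarith only [h1, h2]
end
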